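/- arXiv:1903.07470 — 2 statements merged into one kernel-verified Lean document; each statement's English description precedes it below -/
import Mathlib

section
/- For ρ in the state space S, the Lyapunov function V(ρ) = √(Λ₁(ρ)Λ₂(ρ) + 1 − Γ(ρ)²) vanishes, i.e. Λ₁(ρ)Λ₂(ρ) = 0 and Γ(ρ)² = 1, if and only if ρ is one of the four Bell states Ψ₊Ψ₊*, Ψ₋Ψ₋*, Φ₊Φ₊*, Φ₋Φ₋*. -/
open Matrix ComplexOrder

noncomputable section

/-- Pauli matrices. -/
def σx : Matrix (Fin 2) (Fin 2) ℂ := !![0, 1; 1, 0]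
def σy : Matrix (Fin 2) (Fin 2) ℂ := !![0, -Complex.I; Complex.I, 0]
def σz : Matrix (Fin 2) (Fin 2) ℂ := !![1, 0; 0, -1]
def id2 : Matrix (Fin 2) (Fin 2) ℂ := 1

/-- Kronecker product of two `2 × 2` matrices, indexed by `Fin 4`
(with the identification `(i,k) ↦ 2*i + k`). -/
def kron (A B : Matrix (Fin 2) (Fin 2) ℂ) : Matrix (Fin 4) (Fin 4) ℂ :=
  fun i j => A ⟨i.val / 2, by omega⟩ ⟨j.val / 2, by omega⟩ *
             B ⟨i.val % 2, by omega⟩ ⟨j.val % 2, by omega⟩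

/-- The measurement matrices `L_z = σ_z ⊗ σ_z` and `L_x = σ_x ⊗ σ_x`. -/
def Lz : Matrix (Fin 4) (Fin 4) ℂ := kron σz σz
def Lx : Matrix (Fin 4) (Fin 4) ℂ := kron σx σx

/-- The Bell vectors. -/
def PsiPlus : Fin 4 → ℂ := ![(Real.sqrt 2 : ℂ)⁻¹, 0, 0, (Real.sqrt 2 : ℂ)⁻¹]
def PsiMinus : Fin 4 → ℂ := ![(Real.sqrt 2 : ℂ)⁻¹, 0, 0, -(Real.sqrt 2 : ℂ)⁻¹]
def PhiPlus : Fin 4 → ℂ := ![0, (Real.sqrt 2 : ℂ)⁻¹, (Real.sqrt 2 : ℂ)⁻¹, 0]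
def PhiMinus : Fin 4 → ℂ := ![0, (Real.sqrt 2 : ℂ)⁻¹, -(Real.sqrt 2 : ℂ)⁻¹, 0]

/-- The rank-one projection `ξξ*`. -/
def outer (ξ : Fin 4 → ℂ) : Matrix (Fin 4) (Fin 4) ℂ := Matrix.vecMulVec ξ (star ξ)

/-- The set of the four Bell states. -/
def BellStates : Set (Matrix (Fin 4) (Fin 4) ℂ) :=
  {outer PsiPlus, outer PsiMinus, outer PhiPlus, outer PhiMinus}

/-- The state space `S`. -/
def IsState (ρ : Matrix (Fin 4) (Fin 4) ℂ) : Prop := ρ.PosSemidef ∧ ρ.trace = 1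

def Λ₁ (ρ : Matrix (Fin 4) (Fin 4) ℂ) : ℝ := (ρ 0 0).re + (ρ 3 3).re
def Λ₂ (ρ : Matrix (Fin 4) (Fin 4) ℂ) : ℝ := (ρ 1 1).re + (ρ 2 2).re
def Γ (ρ : Matrix (Fin 4) (Fin 4) ℂ) : ℝ := 2 * (ρ 1 2).re + 2 * (ρ 0 3).re
def Δ (ρ : Matrix (Fin 4) (Fin 4) ℂ) : ℝ := Λ₁ ρ * (ρ 1 2).re - Λ₂ ρ * (ρ 0 3).re

lemma diag_nonneg' {n : ℕ} {ρ : Matrix (Fin n) (Fin n) ℂ} (h : ρ.PosSemidef) (i : Fin n) :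
    0 ≤ ρ i i := by
  have := h.dotProduct_mulVec_nonneg (Pi.single i 1)
  simpa [dotProduct, mulVec, Pi.single_apply, Finset.mul_sum] using this

lemma col_zero' {n : ℕ} {ρ : Matrix (Fin n) (Fin n) ℂ} (h : ρ.PosSemidef) {i : Fin n}
    (hi : ρ i i = 0) (j : Fin n) : ρ j i = 0 := by
  have h0 : star (Pi.single i (1:ℂ)) ⬝ᵥ ρ *ᵥ Pi.single i 1 = 0 := by
    simpa [dotProduct, mulVec, Pi.single_apply, Finset.mul_sum] using hi
  have hz := (h.dotProduct_mulVec_zero_iff _).1 h0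
  have := congrFun hz j
  simpa [mulVec, Pi.single_apply] using this

lemma row_zero' {n : ℕ} {ρ : Matrix (Fin n) (Fin n) ℂ} (h : ρ.PosSemidef) {i : Fin n}
    (hi : ρ i i = 0) (j : Fin n) : ρ i j = 0 := by
  have := h.1.apply i j
  rw [← this, col_zero' h hi j, star_zero]

lemma sqrt2_fact : ((Real.sqrt 2 : ℂ))⁻¹ * ((Real.sqrt 2 : ℂ))⁻¹ = 1/2 := by
  rw [← mul_inv]
  norm_cast
  rw [Real.mul_self_sqrt (by norm_num)]
  norm_num

lemma psi_case {ρ : Matrix (Fin 4) (Fin 4) ℂ} (h : ρ.PosSemidef) (htr : ρ.trace = 1)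
    (hz : ∀ i j : Fin 4, i = 1 ∨ i = 2 ∨ j = 1 ∨ j = 2 → ρ i j = 0)
    (ε : ℝ) (hε : ε ^ 2 = 1) (hg : 2 * (ρ 0 3).re = ε) :
    ρ = outer ![(Real.sqrt 2 : ℂ)⁻¹, 0, 0, (ε:ℂ) * (Real.sqrt 2 : ℂ)⁻¹] := by
  have hH := h.1
  have h30 : ρ 3 0 = star (ρ 0 3) := (hH.apply 3 0).symm
  have him0 : (ρ 0 0).im = 0 := by
    have h' := congrArg Complex.im (hH.apply 0 0)
    simp at h'; linarith
  have him3 : (ρ 3 3).im = 0 := by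
    have h' := congrArg Complex.im (hH.apply 3 3)
    simp at h'; linarith
  have htr' : ρ 0 0 + ρ 3 3 = 1 := by
    have ht : ρ.trace = ρ 0 0 + ρ 1 1 + ρ 2 2 + ρ 3 3 := by
      simp [Matrix.trace, Fin.sum_univ_four]
    rw [ht, hz 1 1 (by simp), hz 2 2 (by simp)] at htr
    linear_combination htr
  have htre : (ρ 0 0).re + (ρ 3 3).re = 1 := by
    simpa [Complex.ext_iff] using congrArg Complex.re htr'
  have hform : star (![1, 0, 0, -(ε:ℂ)]) ⬝ᵥ ρ *ᵥ (![1, 0, 0, -(ε:ℂ)]) = 0 := by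
    simp only [dotProduct, mulVec, Fin.sum_univ_four]
    simp [h30]
    refine Complex.ext ?_ ?_
    · simp [Complex.add_re, Complex.add_im, Complex.mul_re, Complex.mul_im, him0, him3]
      linear_combination htre + ((ρ 3 3).re - 1) * hε - ε * hg
    · simp [Complex.add_re, Complex.add_im, Complex.mul_re, Complex.mul_im, him0, him3]
      ring
  have hker := (h.dotProduct_mulVec_zero_iff _).1 hform
  have hk0 : ρ 0 0 - ρ 0 3 * (ε:ℂ) = 0 := by
    have := congrFun hker 0
    simpa [mulVec, Fin.sum_univ_four, sub_eq_add_neg, vecHead, vecTail] using this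
  have hk3 : ρ 3 0 - ρ 3 3 * (ε:ℂ) = 0 := by
    have := congrFun hker 3
    simpa [mulVec, Fin.sum_univ_four, sub_eq_add_neg, vecHead, vecTail] using this
  have hεC : (ε:ℂ) ^ 2 = 1 := by rw [← Complex.ofReal_pow, hε, Complex.ofReal_one]
  have h03 : ρ 0 3 = ρ 0 0 * (ε:ℂ) := by
    have h' : ρ 0 0 * (ε:ℂ) = ρ 0 3 * (ε:ℂ) * (ε:ℂ) := by
      rw [sub_eq_zero] at hk0; rw [hk0]
    rw [h']; rw [mul_assoc, ← sq, hεC, mul_one]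
  have ha : (ρ 0 0).re = 1/2 := by
    have h' : 2 * ((ρ 0 0).re * ε) = ε := by
      have h'' := congrArg Complex.re h03
      simp [Complex.mul_re, him0] at h''
      rw [h''] at hg; linarith
    linear_combination (ε/2) * h' + (1/2 - (ρ 0 0).re) * hε
  have h00 : ρ 0 0 = 1/2 := by
    refine Complex.ext ?_ ?_ <;> simp [ha, him0]
  have h33 : ρ 3 3 = 1/2 := by
    have h' : ρ 3 3 = 1 - ρ 0 0 := by linear_combination htr'
    rw [h', h00]; norm_num
  have h03' : ρ 0 3 = (ε:ℂ) * (1/2) := by rw [h03, h00]; ring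
  have h30' : ρ 3 0 = (ε:ℂ) * (1/2) := by
    rw [sub_eq_zero] at hk3; rw [hk3, h33]; ring
  ext i j
  fin_cases i <;> fin_cases j <;>
    simp [outer, Matrix.vecMulVec_apply, Complex.conj_ofReal, map_inv₀, mul_comm,
      mul_assoc, mul_left_comm, sqrt2_fact, h00, h33, h03', h30', hz] <;>
    rw [← mul_assoc, ← sq, hεC, one_mul]

lemma phi_case {ρ : Matrix (Fin 4) (Fin 4) ℂ} (h : ρ.PosSemidef) (htr : ρ.trace = 1)
    (hz : ∀ i j : Fin 4, i = 0 ∨ i = 3 ∨ j = 0 ∨ j = 3 → ρ i j = 0)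
    (ε : ℝ) (hε : ε ^ 2 = 1) (hg : 2 * (ρ 1 2).re = ε) :
    ρ = outer ![0, (Real.sqrt 2 : ℂ)⁻¹, (ε:ℂ) * (Real.sqrt 2 : ℂ)⁻¹, 0] := by
  have hH := h.1
  have h21 : ρ 2 1 = star (ρ 1 2) := (hH.apply 2 1).symm
  have him1 : (ρ 1 1).im = 0 := by
    have h' := congrArg Complex.im (hH.apply 1 1)
    simp at h'; linarith
  have him2 : (ρ 2 2).im = 0 := by
    have h' := congrArg Complex.im (hH.apply 2 2)
    simp at h'; linarith
  have htr' : ρ 1 1 + ρ 2 2 = 1 := by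
    have ht : ρ.trace = ρ 0 0 + ρ 1 1 + ρ 2 2 + ρ 3 3 := by
      simp [Matrix.trace, Fin.sum_univ_four]
    rw [ht, hz 0 0 (by simp), hz 3 3 (by simp)] at htr
    linear_combination htr
  have htre : (ρ 1 1).re + (ρ 2 2).re = 1 := by
    simpa [Complex.ext_iff] using congrArg Complex.re htr'
  have hform : star (![0, 1, -(ε:ℂ), 0]) ⬝ᵥ ρ *ᵥ (![0, 1, -(ε:ℂ), 0]) = 0 := by
    simp only [dotProduct, mulVec, Fin.sum_univ_four]
    simp [h21]
    refine Complex.ext ?_ ?_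
    · simp [Complex.add_re, Complex.add_im, Complex.mul_re, Complex.mul_im, him1, him2]
      linear_combination htre + ((ρ 2 2).re - 1) * hε - ε * hg
    · simp [Complex.add_re, Complex.add_im, Complex.mul_re, Complex.mul_im, him1, him2]
      ring
  have hker := (h.dotProduct_mulVec_zero_iff _).1 hform
  have hk1 : ρ 1 1 - ρ 1 2 * (ε:ℂ) = 0 := by
    have := congrFun hker 1
    simpa [mulVec, Fin.sum_univ_four, sub_eq_add_neg, vecHead, vecTail] using this
  have hk2 : ρ 2 1 - ρ 2 2 * (ε:ℂ) = 0 := by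
    have := congrFun hker 2
    simpa [mulVec, Fin.sum_univ_four, sub_eq_add_neg, vecHead, vecTail] using this
  have hεC : (ε:ℂ) ^ 2 = 1 := by rw [← Complex.ofReal_pow, hε, Complex.ofReal_one]
  have h12 : ρ 1 2 = ρ 1 1 * (ε:ℂ) := by
    have h' : ρ 1 1 * (ε:ℂ) = ρ 1 2 * (ε:ℂ) * (ε:ℂ) := by
      rw [sub_eq_zero] at hk1; rw [hk1]
    rw [h']; rw [mul_assoc, ← sq, hεC, mul_one]
  have ha : (ρ 1 1).re = 1/2 := by
    have h' : 2 * ((ρ 1 1).re * ε) = ε := by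
      have h'' := congrArg Complex.re h12
      simp [Complex.mul_re, him1] at h''
      rw [h''] at hg; linarith
    linear_combination (ε/2) * h' + (1/2 - (ρ 1 1).re) * hε
  have h11 : ρ 1 1 = 1/2 := by
    refine Complex.ext ?_ ?_ <;> simp [ha, him1]
  have h22 : ρ 2 2 = 1/2 := by
    have h' : ρ 2 2 = 1 - ρ 1 1 := by linear_combination htr'
    rw [h', h11]; norm_num
  have h12' : ρ 1 2 = (ε:ℂ) * (1/2) := by rw [h12, h11]; ring
  have h21' : ρ 2 1 = (ε:ℂ) * (1/2) := by
    rw [sub_eq_zero] at hk2; rw [hk2, h22]; ring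
  ext i j
  fin_cases i <;> fin_cases j <;>
    simp [outer, Matrix.vecMulVec_apply, Complex.conj_ofReal, map_inv₀, mul_comm,
      mul_assoc, mul_left_comm, sqrt2_fact, h11, h22, h12', h21', hz] <;>
    rw [← mul_assoc, ← sq, hεC, one_mul]

/-- the Lyapunov function `V(ρ) = √(Λ₁Λ₂ + 1 - Γ²)` vanishes
(i.e. `Λ₁(ρ)Λ₂(ρ) = 0` and `Γ(ρ)² = 1`) iff `ρ` is one of the four Bell states. -/
theorem lyapunov_vanishes_iff_bell (ρ : Matrix (Fin 4) (Fin 4) ℂ) (hρ : IsState ρ) :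
    (Λ₁ ρ * Λ₂ ρ = 0 ∧ Γ ρ ^ 2 = 1) ↔ ρ ∈ BellStates := by
  obtain ⟨hpsd, htr⟩ := hρ
  constructor
  · rintro ⟨hΛ, hΓ⟩
    have hdiag : ∀ i : Fin 4, 0 ≤ (ρ i i).re ∧ (ρ i i).im = 0 := by
      intro i
      have := diag_nonneg' hpsd i
      rw [Complex.nonneg_iff] at this
      exact ⟨this.1, this.2.symm⟩
    have hΓ' : Γ ρ = 1 ∨ Γ ρ = -1 := by
      have h' : (Γ ρ - 1) * (Γ ρ + 1) = 0 := by nlinarith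
      rcases mul_eq_zero.1 h' with h' | h'
      · left; linarith
      · right; linarith
    rcases mul_eq_zero.1 hΛ with hL | hL
    · -- Λ₁ = 0 : Φ states
      have h00 : ρ 0 0 = 0 := by
        refine Complex.ext ?_ ?_ <;>
          simp [(hdiag 0).2] <;>
        · have := (hdiag 0).1; have := (hdiag 3).1
          unfold Λ₁ at hL; linarith
      have h33 : ρ 3 3 = 0 := by
        refine Complex.ext ?_ ?_ <;>
          simp [(hdiag 3).2] <;>
        · have := (hdiag 0).1; have := (hdiag 3).1
          unfold Λ₁ at hL; linarith
      have hz : ∀ i j : Fin 4, i = 0 ∨ i = 3 ∨ j = 0 ∨ j = 3 → ρ i j = 0 := by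
        rintro i j (rfl | rfl | rfl | rfl)
        · exact row_zero' hpsd h00 j
        · exact row_zero' hpsd h33 j
        · exact col_zero' hpsd h00 i
        · exact col_zero' hpsd h33 i
      have hΓeq : Γ ρ = 2 * (ρ 1 2).re := by
        unfold Γ; rw [hz 0 3 (by simp)]; simp
      rcases hΓ' with hg | hg
      · have := phi_case hpsd htr hz 1 (by norm_num) (by rw [← hΓeq]; exact hg)
        have hv : (![0, (Real.sqrt 2 : ℂ)⁻¹, ((1 : ℝ):ℂ) * (Real.sqrt 2 : ℂ)⁻¹, 0] : Fin 4 → ℂ)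
            = PhiPlus := by
          funext k; fin_cases k <;> simp [PhiPlus]
        rw [this, hv]
        simp [BellStates]
      · have := phi_case hpsd htr hz (-1) (by norm_num) (by rw [← hΓeq]; exact hg)
        have hv : (![0, (Real.sqrt 2 : ℂ)⁻¹, ((-1 : ℝ):ℂ) * (Real.sqrt 2 : ℂ)⁻¹, 0] : Fin 4 → ℂ)
            = PhiMinus := by
          funext k; fin_cases k <;> simp [PhiMinus]
        rw [this, hv]
        simp [BellStates]
    · -- Λ₂ = 0 : Ψ states
      have h11 : ρ 1 1 = 0 := by
        refine Complex.ext ?_ ?_ <;>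
          simp [(hdiag 1).2] <;>
        · have := (hdiag 1).1; have := (hdiag 2).1
          unfold Λ₂ at hL; linarith
      have h22 : ρ 2 2 = 0 := by
        refine Complex.ext ?_ ?_ <;>
          simp [(hdiag 2).2] <;>
        · have := (hdiag 1).1; have := (hdiag 2).1
          unfold Λ₂ at hL; linarith
      have hz : ∀ i j : Fin 4, i = 1 ∨ i = 2 ∨ j = 1 ∨ j = 2 → ρ i j = 0 := by
        rintro i j (rfl | rfl | rfl | rfl)
        · exact row_zero' hpsd h11 j
        · exact row_zero' hpsd h22 j
        · exact col_zero' hpsd h11 i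
        · exact col_zero' hpsd h22 i
      have hΓeq : Γ ρ = 2 * (ρ 0 3).re := by
        unfold Γ; rw [hz 1 2 (by simp)]; simp
      rcases hΓ' with hg | hg
      · have := psi_case hpsd htr hz 1 (by norm_num) (by rw [← hΓeq]; exact hg)
        have hv : (![(Real.sqrt 2 : ℂ)⁻¹, 0, 0, ((1 : ℝ):ℂ) * (Real.sqrt 2 : ℂ)⁻¹] : Fin 4 → ℂ)
            = PsiPlus := by
          funext k; fin_cases k <;> simp [PsiPlus]
        rw [this, hv]
        simp [BellStates]
      · have := psi_case hpsd htr hz (-1) (by norm_num) (by rw [← hΓeq]; exact hg)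
        have hv : (![(Real.sqrt 2 : ℂ)⁻¹, 0, 0, ((-1 : ℝ):ℂ) * (Real.sqrt 2 : ℂ)⁻¹] : Fin 4 → ℂ)
            = PsiMinus := by
          funext k; fin_cases k <;> simp [PsiMinus]
        rw [this, hv]
        simp [BellStates]
  · intro hB
    rcases hB with rfl | rfl | rfl | rfl <;>
      constructor <;>
      simp [Λ₁, Λ₂, Γ, outer, Matrix.vecMulVec_apply, PsiPlus, PsiMinus, PhiPlus, PhiMinus,
        Complex.conj_ofReal, map_inv₀, sqrt2_fact] <;>
      norm_num [sqrt2_fact, Complex.ext_iff]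
end
end

section
/- Let ω ≥ 0, M₁ > 0, M₂ > 0, H₀ = ω L_z, L₁ = √M₁ L_z, L₂ = √M₂ L_x. Then for every ρ in the state space S: Tr(L_x F₀(ρ)) = 0, Tr(L_x F₁(ρ)) = 0, Tr(L_x F₂(ρ)) = 0, Tr(L_x G₁(ρ)) = −8√M₁ · Δ(ρ), and Tr(L_x G₂(ρ)) = 2√M₂ · (1 − Γ(ρ)²). (These are the drift and diffusion coefficients of Γ(ρ_t) = Tr(L_x ρ_t) in the uncontrolled dynamics, up to the efficiency factors √η_k.) -/
open Matrix ComplexOrder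

noncomputable section

/-- Hamiltonian part of the drift: `F₀(ρ) = -i[H₀, ρ]` (for `u ≡ 0`). -/
def Fham (H ρ : Matrix (Fin 4) (Fin 4) ℂ) : Matrix (Fin 4) (Fin 4) ℂ :=
  -(Complex.I • (H * ρ - ρ * H))

/-- Dissipative drift: `F_k(ρ) = L_k ρ L_k - (1/2)(L_k² ρ + ρ L_k²)`. -/
def Fdiss (L ρ : Matrix (Fin 4) (Fin 4) ℂ) : Matrix (Fin 4) (Fin 4) ℂ :=
  L * ρ * L - (1 / 2 : ℂ) • (L * L * ρ + ρ * (L * L))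

/-- Diffusion map: `G_k(ρ) = L_k ρ + ρ L_k - 2 Tr(L_k ρ) ρ`. -/
def Gdiff (L ρ : Matrix (Fin 4) (Fin 4) ℂ) : Matrix (Fin 4) (Fin 4) ℂ :=
  L * ρ + ρ * L - (2 * (L * ρ).trace) • ρ

lemma Lx_eq : Lx = !![0,0,0,1; 0,0,1,0; 0,1,0,0; 1,0,0,0] := by
  ext i j
  fin_cases i <;> fin_cases j <;> simp [Lx, kron, σx] <;> rfl

lemma Lz_eq : Lz = !![1,0,0,0; 0,-1,0,0; 0,0,-1,0; 0,0,0,1] := by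
  ext i j
  fin_cases i <;> fin_cases j <;> simp [Lz, kron, σz] <;> rfl

section entry
variable (A : Matrix (Fin 4) (Fin 4) ℂ) (i j : Fin 4)

lemma Lx_mul₀ : (Lx * A) 0 j = A 3 j := by
  rw [Matrix.mul_apply, Fin.sum_univ_four, Lx_eq]
  simp [Matrix.cons_val_one, Matrix.head_cons, Matrix.vecHead, Matrix.vecTail, Function.comp]
lemma Lx_mul₁ : (Lx * A) 1 j = A 2 j := by
  rw [Matrix.mul_apply, Fin.sum_univ_four, Lx_eq]
  simp [Matrix.cons_val_one, Matrix.head_cons, Matrix.vecHead, Matrix.vecTail, Function.comp]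
lemma Lx_mul₂ : (Lx * A) 2 j = A 1 j := by
  rw [Matrix.mul_apply, Fin.sum_univ_four, Lx_eq]
  simp [Matrix.cons_val_one, Matrix.head_cons, Matrix.vecHead, Matrix.vecTail, Function.comp]
lemma Lx_mul₃ : (Lx * A) 3 j = A 0 j := by
  rw [Matrix.mul_apply, Fin.sum_univ_four, Lx_eq]
  simp [Matrix.cons_val_one, Matrix.head_cons, Matrix.vecHead, Matrix.vecTail, Function.comp]

lemma mul_Lx₀ : (A * Lx) i 0 = A i 3 := by
  rw [Matrix.mul_apply, Fin.sum_univ_four, Lx_eq]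
  simp [Matrix.cons_val_one, Matrix.head_cons, Matrix.vecHead, Matrix.vecTail, Function.comp]
lemma mul_Lx₁ : (A * Lx) i 1 = A i 2 := by
  rw [Matrix.mul_apply, Fin.sum_univ_four, Lx_eq]
  simp [Matrix.cons_val_one, Matrix.head_cons, Matrix.vecHead, Matrix.vecTail, Function.comp]
lemma mul_Lx₂ : (A * Lx) i 2 = A i 1 := by
  rw [Matrix.mul_apply, Fin.sum_univ_four, Lx_eq]
  simp [Matrix.cons_val_one, Matrix.head_cons, Matrix.vecHead, Matrix.vecTail, Function.comp]
lemma mul_Lx₃ : (A * Lx) i 3 = A i 0 := by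
  rw [Matrix.mul_apply, Fin.sum_univ_four, Lx_eq]
  simp [Matrix.cons_val_one, Matrix.head_cons, Matrix.vecHead, Matrix.vecTail, Function.comp]

lemma Lz_mul₀ : (Lz * A) 0 j = A 0 j := by
  rw [Matrix.mul_apply, Fin.sum_univ_four, Lz_eq]
  simp [Matrix.cons_val_one, Matrix.head_cons, Matrix.vecHead, Matrix.vecTail, Function.comp]
lemma Lz_mul₁ : (Lz * A) 1 j = -A 1 j := by
  rw [Matrix.mul_apply, Fin.sum_univ_four, Lz_eq]
  simp [Matrix.cons_val_one, Matrix.head_cons, Matrix.vecHead, Matrix.vecTail, Function.comp]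
lemma Lz_mul₂ : (Lz * A) 2 j = -A 2 j := by
  rw [Matrix.mul_apply, Fin.sum_univ_four, Lz_eq]
  simp [Matrix.cons_val_one, Matrix.head_cons, Matrix.vecHead, Matrix.vecTail, Function.comp]
lemma Lz_mul₃ : (Lz * A) 3 j = A 3 j := by
  rw [Matrix.mul_apply, Fin.sum_univ_four, Lz_eq]
  simp [Matrix.cons_val_one, Matrix.head_cons, Matrix.vecHead, Matrix.vecTail, Function.comp]

lemma mul_Lz₀ : (A * Lz) i 0 = A i 0 := by
  rw [Matrix.mul_apply, Fin.sum_univ_four, Lz_eq]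
  simp [Matrix.cons_val_one, Matrix.head_cons, Matrix.vecHead, Matrix.vecTail, Function.comp]
lemma mul_Lz₁ : (A * Lz) i 1 = -A i 1 := by
  rw [Matrix.mul_apply, Fin.sum_univ_four, Lz_eq]
  simp [Matrix.cons_val_one, Matrix.head_cons, Matrix.vecHead, Matrix.vecTail, Function.comp]
lemma mul_Lz₂ : (A * Lz) i 2 = -A i 2 := by
  rw [Matrix.mul_apply, Fin.sum_univ_four, Lz_eq]
  simp [Matrix.cons_val_one, Matrix.head_cons, Matrix.vecHead, Matrix.vecTail, Function.comp]
lemma mul_Lz₃ : (A * Lz) i 3 = A i 3 := by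
  rw [Matrix.mul_apply, Fin.sum_univ_four, Lz_eq]
  simp [Matrix.cons_val_one, Matrix.head_cons, Matrix.vecHead, Matrix.vecTail, Function.comp]
end entry

lemma trace4 (A : Matrix (Fin 4) (Fin 4) ℂ) : A.trace = A 0 0 + A 1 1 + A 2 2 + A 3 3 := by
  simp [Matrix.trace, Fin.sum_univ_four]


lemma LzLz : Lz * Lz = 1 := by
  ext i j
  fin_cases i <;> fin_cases j <;>
    simp [Lz_mul₀, Lz_mul₁, Lz_mul₂, Lz_mul₃, Lz_eq, Matrix.one_apply, Fin.ext_iff,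
      Matrix.cons_val_one, Matrix.head_cons, Matrix.vecHead, Matrix.vecTail, Function.comp]

lemma LxLx : Lx * Lx = 1 := by
  ext i j
  fin_cases i <;> fin_cases j <;>
    simp [Lx_mul₀, Lx_mul₁, Lx_mul₂, Lx_mul₃, Lx_eq, Matrix.one_apply, Fin.ext_iff,
      Matrix.cons_val_one, Matrix.head_cons, Matrix.vecHead, Matrix.vecTail, Function.comp]


lemma aux_fham (a : ℂ) (ρ : Matrix (Fin 4) (Fin 4) ℂ) :
    (Lx * Fham (a • Lz) ρ).trace = 0 := by
  simp only [Fham, trace4, Matrix.smul_mul, Matrix.mul_smul, Matrix.neg_apply,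
    Matrix.smul_apply, Matrix.sub_apply, Matrix.add_apply, smul_eq_mul,
    Lx_mul₀, Lx_mul₁, Lx_mul₂, Lx_mul₃, mul_Lx₀, mul_Lx₁, mul_Lx₂, mul_Lx₃,
    Lz_mul₀, Lz_mul₁, Lz_mul₂, Lz_mul₃, mul_Lz₀, mul_Lz₁, mul_Lz₂, mul_Lz₃]
  ring

lemma aux_fdiss (a : ℂ) (ρ : Matrix (Fin 4) (Fin 4) ℂ) :
    (Lx * Fdiss (a • Lz) ρ).trace = 0 ∧ (Lx * Fdiss (a • Lx) ρ).trace = 0 := by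
  constructor <;>
  · simp only [Fdiss, trace4, Matrix.smul_mul, Matrix.mul_smul, mul_assoc, LzLz, LxLx,
      Matrix.mul_one, Matrix.one_mul, Matrix.neg_apply,
      Matrix.smul_apply, Matrix.sub_apply, Matrix.add_apply, smul_eq_mul,
      Lx_mul₀, Lx_mul₁, Lx_mul₂, Lx_mul₃, mul_Lx₀, mul_Lx₁, mul_Lx₂, mul_Lx₃,
      Lz_mul₀, Lz_mul₁, Lz_mul₂, Lz_mul₃, mul_Lz₀, mul_Lz₁, mul_Lz₂, mul_Lz₃]
    ring

lemma aux_gz (a : ℝ) (ρ : Matrix (Fin 4) (Fin 4) ℂ) (hherm : ρ.IsHermitian) (htr : ρ.trace = 1)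
    (L₁ L₂ : ℝ) (hΛ₁ : L₁ = (ρ 0 0).re + (ρ 3 3).re) (hΛ₂ : L₂ = (ρ 1 1).re + (ρ 2 2).re) :
    (Lx * Gdiff ((a:ℂ) • Lz) ρ).trace =
      ((-8 * a * (L₁ * (ρ 1 2).re - L₂ * (ρ 0 3).re) : ℝ) : ℂ) := by
  have h30 : ρ 3 0 = star (ρ 0 3) := by
    have := congrFun (congrFun hherm 3) 0
    simpa [Matrix.conjTranspose_apply] using this.symm
  have h21 : ρ 2 1 = star (ρ 1 2) := by
    have := congrFun (congrFun hherm 2) 1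
    simpa [Matrix.conjTranspose_apply] using this.symm
  have hdiag : ∀ i, ρ i i = ((ρ i i).re : ℂ) := by
    intro i
    have := congrFun (congrFun hherm i) i
    rw [Matrix.conjTranspose_apply] at this
    exact (Complex.conj_eq_iff_re.mp this).symm
  have hre : (ρ 0 0).re + (ρ 1 1).re + (ρ 2 2).re + (ρ 3 3).re = 1 := by
    have : ((ρ 0 0).re : ℂ) + (ρ 1 1).re + (ρ 2 2).re + (ρ 3 3).re = 1 := by
      rw [← hdiag 0, ← hdiag 1, ← hdiag 2, ← hdiag 3, ← trace4, htr]
    exact_mod_cast this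
  simp only [Gdiff, trace4, Matrix.smul_mul, Matrix.mul_smul, mul_assoc, LzLz, LxLx,
    Matrix.mul_one, Matrix.one_mul, Matrix.neg_apply,
    Matrix.smul_apply, Matrix.sub_apply, Matrix.add_apply, smul_eq_mul,
    Lx_mul₀, Lx_mul₁, Lx_mul₂, Lx_mul₃, mul_Lx₀, mul_Lx₁, mul_Lx₂, mul_Lx₃,
    Lz_mul₀, Lz_mul₁, Lz_mul₂, Lz_mul₃, mul_Lz₀, mul_Lz₁, mul_Lz₂, mul_Lz₃]
  rw [h30, h21, hdiag 0, hdiag 1, hdiag 2, hdiag 3, Complex.star_def]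
  subst hΛ₁ hΛ₂
  set c := ρ 0 3; set d := ρ 1 2
  rw [Complex.ext_iff]
  constructor <;>
    simp only [Complex.add_re, Complex.add_im, Complex.sub_re, Complex.sub_im, Complex.mul_re,
      Complex.mul_im, Complex.neg_re, Complex.neg_im, Complex.conj_re, Complex.conj_im,
      Complex.ofReal_re, Complex.ofReal_im, Complex.re_ofNat, Complex.im_ofNat]
  · linear_combination (-4 * a * (c.re - d.re)) * hre
  · ring

lemma aux_gx (a : ℝ) (ρ : Matrix (Fin 4) (Fin 4) ℂ) (hherm : ρ.IsHermitian) (htr : ρ.trace = 1) :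
    (Lx * Gdiff ((a:ℂ) • Lx) ρ).trace =
      ((2 * a * (1 - (2 * (ρ 1 2).re + 2 * (ρ 0 3).re) ^ 2) : ℝ) : ℂ) := by
  have h30 : ρ 3 0 = star (ρ 0 3) := by
    have := congrFun (congrFun hherm 3) 0
    simpa [Matrix.conjTranspose_apply] using this.symm
  have h21 : ρ 2 1 = star (ρ 1 2) := by
    have := congrFun (congrFun hherm 2) 1
    simpa [Matrix.conjTranspose_apply] using this.symm
  have hdiag : ∀ i, ρ i i = ((ρ i i).re : ℂ) := by
    intro i
    have := congrFun (congrFun hherm i) i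
    rw [Matrix.conjTranspose_apply] at this
    exact (Complex.conj_eq_iff_re.mp this).symm
  have hre : (ρ 0 0).re + (ρ 1 1).re + (ρ 2 2).re + (ρ 3 3).re = 1 := by
    have : ((ρ 0 0).re : ℂ) + (ρ 1 1).re + (ρ 2 2).re + (ρ 3 3).re = 1 := by
      rw [← hdiag 0, ← hdiag 1, ← hdiag 2, ← hdiag 3, ← trace4, htr]
    exact_mod_cast this
  simp only [Gdiff, trace4, Matrix.smul_mul, Matrix.mul_smul, mul_assoc, LzLz, LxLx,
    Matrix.mul_one, Matrix.one_mul, Matrix.neg_apply,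
    Matrix.smul_apply, Matrix.sub_apply, Matrix.add_apply, smul_eq_mul,
    Lx_mul₀, Lx_mul₁, Lx_mul₂, Lx_mul₃, mul_Lx₀, mul_Lx₁, mul_Lx₂, mul_Lx₃,
    Lz_mul₀, Lz_mul₁, Lz_mul₂, Lz_mul₃, mul_Lz₀, mul_Lz₁, mul_Lz₂, mul_Lz₃]
  rw [h30, h21, hdiag 0, hdiag 1, hdiag 2, hdiag 3, Complex.star_def]
  set c := ρ 0 3; set d := ρ 1 2
  rw [Complex.ext_iff]
  constructor <;>
    simp only [Complex.add_re, Complex.add_im, Complex.sub_re, Complex.sub_im, Complex.mul_re,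
      Complex.mul_im, Complex.neg_re, Complex.neg_im, Complex.conj_re, Complex.conj_im,
      Complex.ofReal_re, Complex.ofReal_im, Complex.one_re, Complex.one_im,
      Complex.re_ofNat, Complex.im_ofNat]
  · linear_combination (2 * a) * hre
  · ring

/-- drift and diffusion coefficients of `Γ(ρ_t) = Tr(L_x ρ_t)` in the
uncontrolled dynamics: `Tr(L_x F₀(ρ)) = Tr(L_x F₁(ρ)) = Tr(L_x F₂(ρ)) = 0`,
`Tr(L_x G₁(ρ)) = -8√M₁ Δ(ρ)` and `Tr(L_x G₂(ρ)) = 2√M₂ (1 - Γ(ρ)²)`. -/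
theorem gamma_dynamics (ω M₁ M₂ : ℝ) (hω : 0 ≤ ω) (hM₁ : 0 < M₁) (hM₂ : 0 < M₂)
    (ρ : Matrix (Fin 4) (Fin 4) ℂ) (hρ : IsState ρ) :
    (Lx * Fham ((ω : ℂ) • Lz) ρ).trace = 0 ∧
    (Lx * Fdiss ((Real.sqrt M₁ : ℂ) • Lz) ρ).trace = 0 ∧
    (Lx * Fdiss ((Real.sqrt M₂ : ℂ) • Lx) ρ).trace = 0 ∧
    (Lx * Gdiff ((Real.sqrt M₁ : ℂ) • Lz) ρ).trace =
      ((-8 * Real.sqrt M₁ * Δ ρ : ℝ) : ℂ) ∧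
    (Lx * Gdiff ((Real.sqrt M₂ : ℂ) • Lx) ρ).trace =
      ((2 * Real.sqrt M₂ * (1 - Γ ρ ^ 2) : ℝ) : ℂ) := by
  obtain ⟨hpsd, htr⟩ := hρ
  have hherm := hpsd.1
  refine ⟨aux_fham _ _, (aux_fdiss _ _).1, (aux_fdiss _ _).2, ?_, ?_⟩
  · unfold Δ Λ₁ Λ₂
    exact aux_gz (Real.sqrt M₁) ρ hherm htr _ _ rfl rfl
  · unfold Γ
    exact aux_gx (Real.sqrt M₂) ρ hherm htr
end
end
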